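/- arXiv:2505.05468 — 2 statements merged into one kernel-verified Lean document; each statement's English description precedes it below -/
import Mathlib

section
/- Suppose V, W, Ṽ, W̃ are unitaries with ‖V − Ṽ‖ < Δ, ‖W − W̃‖ < Δ, ‖I − V‖ < δ, ‖I − W‖ < δ in operator norm. Then ‖VWV†W† − ṼW̃Ṽ†W̃†‖ < 8Δδ + 4Δδ² + 8Δ² + 4Δ³ + Δ⁴. -/
open Matrix
open scoped Matrix.Norms.L2Operator

/-! Expanding `[u, v] - [u', v']` and using `u * star u = 1 = v * star v` (and the same for
`u', v'`) to cancel the zeroth-order terms leaves four terms, each the product of a perturbation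
(`u - u'` or `v - v'`), a deviation from the identity (`v - 1`, `v' - 1`, `u - 1` or `u' - 1`)
and unitaries. In a C⋆-algebra unitaries do not change norms, so
`‖[u, v] - [u', v']‖ ≤ ‖u - u'‖ (‖1 - v‖ + ‖1 - v'‖) + ‖v - v'‖ (‖1 - u‖ + ‖1 - u'‖)`,
and `‖1 - u'‖ ≤ ‖1 - u‖ + ‖u - u'‖` turns this into a bound of order `Δ δ + Δ²`. -/

section
variable {R : Type*} [Ring R] [StarRing R]

theorem commutator_sub_commutator_eq {u v u' v' : R} (hu : u ∈ unitary R) (hv : v ∈ unitary R)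
    (hu' : u' ∈ unitary R) (hv' : v' ∈ unitary R) :
    u * v * star u * star v - u' * v' * star u' * star v' =
      (u - u') * (v - 1) * (star u * star v) + u' * ((v' - 1) * (star u - star u')) * star v
        + u' * ((v - v') * (star u - 1)) * star v
        + u' * v' * ((star u' - 1) * (star v - star v')) := by
  calc _ = (u - u') * (v - 1) * (star u * star v) + u' * ((v' - 1) * (star u - star u')) * star v
        + u' * ((v - v') * (star u - 1)) * star v
        + u' * v' * ((star u' - 1) * (star v - star v'))
        + (u * star u - u' * star u') * star v + u' * (v * star v - v' * star v') := by
        noncomm_ring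
    _ = _ := by
      rw [Unitary.mul_star_self_of_mem hu, Unitary.mul_star_self_of_mem hu',
        Unitary.mul_star_self_of_mem hv, Unitary.mul_star_self_of_mem hv']
      simp only [sub_self, zero_mul, mul_zero, add_zero]
end

section
variable {A : Type*} [NormedRing A] [StarRing A] [CStarRing A]

theorem norm_star_sub_one (x : A) : ‖star x - 1‖ = ‖1 - x‖ := by
  rw [← star_one, ← star_sub, norm_star, star_one, norm_sub_rev]

theorem norm_commutator_sub_commutator_le {u v u' v' : A} (hu : u ∈ unitary A)
    (hv : v ∈ unitary A) (hu' : u' ∈ unitary A) (hv' : v' ∈ unitary A) :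
    ‖u * v * star u * star v - u' * v' * star u' * star v'‖ ≤
      ‖u - u'‖ * (‖1 - v‖ + ‖1 - v'‖) + ‖v - v'‖ * (‖1 - u‖ + ‖1 - u'‖) := by
  have h₁ : ‖(u - u') * (v - 1) * (star u * star v)‖ ≤ ‖u - u'‖ * ‖1 - v‖ := by
    rw [CStarRing.norm_mul_mem_unitary _ (mul_mem (Unitary.star_mem hu) (Unitary.star_mem hv))]
    exact (norm_mul_le _ _).trans_eq (by rw [norm_sub_rev v])
  have h₂ : ‖u' * ((v' - 1) * (star u - star u')) * star v‖ ≤ ‖1 - v'‖ * ‖u - u'‖ := by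
    rw [CStarRing.norm_mul_mem_unitary _ (Unitary.star_mem hv),
      CStarRing.norm_mem_unitary_mul _ hu']
    exact (norm_mul_le _ _).trans_eq (by rw [norm_sub_rev v', ← star_sub, norm_star])
  have h₃ : ‖u' * ((v - v') * (star u - 1)) * star v‖ ≤ ‖v - v'‖ * ‖1 - u‖ := by
    rw [CStarRing.norm_mul_mem_unitary _ (Unitary.star_mem hv),
      CStarRing.norm_mem_unitary_mul _ hu']
    exact (norm_mul_le _ _).trans_eq (by rw [norm_star_sub_one])
  have h₄ : ‖u' * v' * ((star u' - 1) * (star v - star v'))‖ ≤ ‖1 - u'‖ * ‖v - v'‖ := by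
    rw [CStarRing.norm_mem_unitary_mul _ (mul_mem hu' hv')]
    exact (norm_mul_le _ _).trans_eq (by rw [norm_star_sub_one, ← star_sub, norm_star])
  rw [commutator_sub_commutator_eq hu hv hu' hv']
  refine norm_add₄_le.trans ?_
  linarith
end

/-- **Approximating group commutators (Dawson–Nielsen).**
If `V, W, Ṽ, W̃` are unitaries with `‖V − Ṽ‖ < Δ`, `‖W − W̃‖ < Δ`, `‖1 − V‖ < δ`,
`‖1 − W‖ < δ` in the operator norm, then
`‖VWV†W† − ṼW̃Ṽ†W̃†‖ < 8Δδ + 4Δδ² + 8Δ² + 4Δ³ + Δ⁴`. -/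
theorem approx_group_commutator
    (n : ℕ) (V W V' W' : Matrix (Fin n) (Fin n) ℂ)
    (hV : V ∈ Matrix.unitaryGroup (Fin n) ℂ)
    (hW : W ∈ Matrix.unitaryGroup (Fin n) ℂ)
    (hV' : V' ∈ Matrix.unitaryGroup (Fin n) ℂ)
    (hW' : W' ∈ Matrix.unitaryGroup (Fin n) ℂ)
    (Δ δ : ℝ)
    (hVV : ‖V - V'‖ < Δ) (hWW : ‖W - W'‖ < Δ)
    (hIV : ‖1 - V‖ < δ) (hIW : ‖1 - W‖ < δ) :
    ‖V * W * Vᴴ * Wᴴ - V' * W' * V'ᴴ * W'ᴴ‖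
      < 8 * Δ * δ + 4 * Δ * δ ^ 2 + 8 * Δ ^ 2 + 4 * Δ ^ 3 + Δ ^ 4 := by
  have hΔ : 0 < Δ := (norm_nonneg _).trans_lt hVV
  have hδ : 0 < δ := (norm_nonneg _).trans_lt hIV
  have hIV' : ‖1 - V'‖ < δ + Δ :=
    (norm_sub_le_norm_sub_add_norm_sub 1 V V').trans_lt (add_lt_add hIV hVV)
  have hIW' : ‖1 - W'‖ < δ + Δ :=
    (norm_sub_le_norm_sub_add_norm_sub 1 W W').trans_lt (add_lt_add hIW hWW)
  calc _ ≤ ‖V - V'‖ * (‖1 - W‖ + ‖1 - W'‖) + ‖W - W'‖ * (‖1 - V‖ + ‖1 - V'‖) :=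
        norm_commutator_sub_commutator_le hV hW hV' hW'
    _ < Δ * (δ + (δ + Δ)) + Δ * (δ + (δ + Δ)) := by gcongr
    _ < 8 * Δ * δ + 4 * Δ * δ ^ 2 + 8 * Δ ^ 2 + 4 * Δ ^ 3 + Δ ^ 4 := by
        nlinarith [mul_pos hΔ hδ, pow_pos hΔ 3, pow_pos hΔ 4, mul_pos hΔ (pow_pos hδ 2)]
end

section
/- Define the QSP unitary U(Φ, x) = e^{iφ₀σ_z} ∏_{j=1}^{k} (W(x) e^{iφ_j σ_z}) where W(x) = [[x, i√(1−x²)],[i√(1−x²), x]] and Φ = (φ₀, …, φ_k) ∈ ℝ^{k+1}. Then for every Φ and every x ∈ [−1,1], there exist polynomials P, Q ∈ ℂ[x] with deg P ≤ k, deg Q ≤ k−1, P of parity k mod 2, Q of parity (k−1) mod 2, satisfying |P(x)|² + (1−x²)|Q(x)|² = 1 for all x ∈ [−1,1], such that the top row of U(Φ, x) equals (P(x), iQ(x)√(1−x²)). -/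
open Matrix Polynomial

/-- The QSP signal unitary `W(x) = [[x, i√(1−x²)],[i√(1−x²), x]]`. -/
noncomputable def Wsig (x : ℝ) : Matrix (Fin 2) (Fin 2) ℂ :=
  !![(x : ℂ), Complex.I * (Real.sqrt (1 - x ^ 2) : ℂ);
     Complex.I * (Real.sqrt (1 - x ^ 2) : ℂ), (x : ℂ)]

/-- The phase unitary `e^{iφσ_z}`. -/
noncomputable def Rz (φ : ℝ) : Matrix (Fin 2) (Fin 2) ℂ :=
  !![Complex.exp (Complex.I * (φ : ℂ)), 0; 0, Complex.exp (-(Complex.I * (φ : ℂ)))]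

/-- The QSP unitary `U(Φ, x) = e^{iφ₀σ_z} ∏_{j=1}^{k} (W(x) e^{iφ_j σ_z})`. -/
noncomputable def qspU {k : ℕ} (Φ : Fin (k + 1) → ℝ) (x : ℝ) :
    Matrix (Fin 2) (Fin 2) ℂ :=
  Rz (Φ 0) * (List.ofFn (fun j : Fin k => Wsig x * Rz (Φ j.succ))).prod

/-!
By induction on `k`, `U(Φ, x)` has the shape `[[P(x), i Q(x) s], [i Q̄(x) s, P̄(x)]]` with
`s = √(1 - x²)`: multiplying such a matrix on the left by `e^{iφσ_z} W(x)` and using `s² = 1 - x²`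
gives the same shape for `P' = e^{iφ} (X P - (1 - X²) Q̄)` and `Q' = e^{iφ} (X Q + P̄)`.
This recursion raises degrees by one and flips parities; it preserves the invariant that `P` and
`X Q` only have monomials of degree `≤ k` and `≡ k (mod 2)`.
The normalisation `|P|² + (1 - x²) |Q|² = 1` is the determinant of that matrix, and `det U = 1`
because `det W(x) = det e^{iφσ_z} = 1`.
-/

open ComplexConjugate

section ParityDegree

def parityDegreeLE (R : Type*) [Semiring R] (k : ℕ) : Submodule R R[X] where
  carrier := {p | ∀ n, p.coeff n ≠ 0 → n ≤ k ∧ n % 2 = k % 2}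
  zero_mem' n hn := absurd (coeff_zero n) hn
  add_mem' {p q} hp hq n hn := by
    rw [coeff_add] at hn
    by_cases hpn : p.coeff n = 0
    · exact hq n (by simpa [hpn] using hn)
    · exact hp n hpn
  smul_mem' c p hp n hn := hp n fun h => hn (by rw [coeff_smul, h, smul_zero])

variable {R : Type*} [Semiring R]

theorem X_mul_mem_parityDegreeLE_iff {p : R[X]} {k : ℕ} :
    X * p ∈ parityDegreeLE R k ↔ ∀ n, p.coeff n ≠ 0 → n < k ∧ n % 2 = (k + 1) % 2 := by
  constructor
  · intro h n hn
    have := h (n + 1) (by rwa [coeff_X_mul])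
    omega
  · rintro h (_ | n) hn
    · exact absurd (coeff_X_mul_zero p) hn
    · have := h n (by rwa [coeff_X_mul] at hn)
      omega

theorem X_mul_mem_parityDegreeLE {p : R[X]} {k : ℕ} (hp : p ∈ parityDegreeLE R k) :
    X * p ∈ parityDegreeLE R (k + 1) :=
  X_mul_mem_parityDegreeLE_iff.mpr fun n hn => by have := hp n hn; omega

theorem mem_parityDegreeLE_of_X_mul_mem {p : R[X]} {k : ℕ} (hp : X * p ∈ parityDegreeLE R k) :
    p ∈ parityDegreeLE R (k + 1) := fun n hn => by
  have := X_mul_mem_parityDegreeLE_iff.mp hp n hn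
  omega

theorem C_mem_parityDegreeLE_zero (c : R) : C c ∈ parityDegreeLE R 0 := fun n hn => by
  rw [coeff_C] at hn
  split_ifs at hn with h
  · simp [h]
  · exact absurd rfl hn

theorem map_mem_parityDegreeLE {S : Type*} [Semiring S] (f : R →+* S) {p : R[X]} {k : ℕ}
    (hp : p ∈ parityDegreeLE R k) : p.map f ∈ parityDegreeLE S k := fun n hn =>
  hp n fun h => hn (by rw [coeff_map, h, map_zero])

theorem degree_le_of_mem_parityDegreeLE {p : R[X]} {k : ℕ} (hp : p ∈ parityDegreeLE R k) :
    p.degree ≤ k :=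
  (degree_le_iff_coeff_zero p k).mpr fun m hm => by
    by_contra h
    exact absurd (hp m h).1 (by exact_mod_cast hm.not_ge)

theorem degree_lt_of_X_mul_mem_parityDegreeLE {p : R[X]} {k : ℕ}
    (hp : X * p ∈ parityDegreeLE R k) : p.degree < k :=
  (degree_lt_iff_coeff_zero p k).mpr fun m hm => by
    by_contra h
    exact absurd (X_mul_mem_parityDegreeLE_iff.mp hp m h).1 hm.not_gt

end ParityDegree

theorem eval_map_conj (p : ℂ[X]) (x : ℝ) : (p.map (starRingEnd ℂ)).eval (x : ℂ) =
    conj (p.eval (x : ℂ)) := by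
  rw [← Complex.conj_ofReal x, eval_map, eval₂_hom, Complex.conj_ofReal]

noncomputable def qspForm (x : ℝ) (p q : ℂ) : Matrix (Fin 2) (Fin 2) ℂ :=
  !![p, Complex.I * q * (Real.sqrt (1 - x ^ 2) : ℂ);
     Complex.I * conj q * (Real.sqrt (1 - x ^ 2) : ℂ), conj p]

section Matrices

variable {x : ℝ}

theorem ofReal_sqrt_one_sub_sq_sq (hx : x ^ 2 ≤ 1) :
    (Real.sqrt (1 - x ^ 2) : ℂ) ^ 2 = 1 - (x : ℂ) ^ 2 := by
  rw [← Complex.ofReal_pow, Real.sq_sqrt (by linarith)]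
  push_cast
  ring

theorem det_qspForm (hx : x ^ 2 ≤ 1) (p q : ℂ) :
    (qspForm x p q).det = ((‖p‖ ^ 2 + (1 - x ^ 2) * ‖q‖ ^ 2 : ℝ) : ℂ) := by
  rw [qspForm, det_fin_two_of, Complex.mul_conj']
  push_cast
  linear_combination (-(q * conj q) * (Real.sqrt (1 - x ^ 2) : ℂ) ^ 2) * Complex.I_sq
    + (q * conj q) * ofReal_sqrt_one_sub_sq_sq hx + Complex.mul_conj' q * (1 - (x : ℂ) ^ 2)

theorem det_Rz (φ : ℝ) : (Rz φ).det = 1 := by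
  rw [Rz, det_fin_two_of, ← Complex.exp_add]
  simp

theorem det_Wsig (hx : x ^ 2 ≤ 1) : (Wsig x).det = 1 := by
  rw [Wsig, det_fin_two_of]
  linear_combination (-(Real.sqrt (1 - x ^ 2) : ℂ) ^ 2) * Complex.I_sq
    + ofReal_sqrt_one_sub_sq_sq hx

theorem Rz_eq_qspForm (φ : ℝ) : Rz φ = qspForm x (Complex.exp (Complex.I * φ)) 0 := by
  rw [Rz, qspForm, ← Complex.exp_conj]
  simp [Complex.conj_ofReal]

theorem Rz_mul_Wsig_mul_qspForm (hx : x ^ 2 ≤ 1) (φ : ℝ) (p q : ℂ) :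
    Rz φ * (Wsig x * qspForm x p q) =
      qspForm x (Complex.exp (Complex.I * φ) * (x * p - (1 - (x : ℂ) ^ 2) * conj q))
        (Complex.exp (Complex.I * φ) * (x * q + conj p)) := by
  have hs := ofReal_sqrt_one_sub_sq_sq hx
  have he : conj (Complex.exp (Complex.I * φ)) = Complex.exp (-(Complex.I * φ)) := by
    rw [← Complex.exp_conj]; simp [Complex.conj_ofReal]
  ext i j
  fin_cases i <;> fin_cases j <;> simp [Rz, Wsig, qspForm, mul_apply, he, Complex.conj_ofReal]
  · linear_combination (conj q * (Real.sqrt (1 - x ^ 2) : ℂ) ^ 2) * Complex.I_sq - conj q * hs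
  · ring
  · ring
  · linear_combination (q * (Real.sqrt (1 - x ^ 2) : ℂ) ^ 2) * Complex.I_sq - q * hs

end Matrices

theorem qspU_zero (Φ : Fin 1 → ℝ) (x : ℝ) : qspU Φ x = Rz (Φ 0) := by
  simp [qspU]

theorem qspU_succ {k : ℕ} (Φ : Fin (k + 2) → ℝ) (x : ℝ) :
    qspU Φ x = Rz (Φ 0) * (Wsig x * qspU (fun i => Φ i.succ) x) := by
  simp only [qspU, List.ofFn_succ, List.prod_cons, mul_assoc]

theorem det_qspU {k : ℕ} (Φ : Fin (k + 1) → ℝ) {x : ℝ} (hx : x ^ 2 ≤ 1) :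
    (qspU Φ x).det = 1 := by
  induction k with
  | zero => rw [qspU_zero, det_Rz]
  | succ k ih => rw [qspU_succ, det_mul, det_mul, det_Rz, det_Wsig hx, ih, one_mul, one_mul]

theorem exists_qspU_eq_qspForm (k : ℕ) (Φ : Fin (k + 1) → ℝ) :
    ∃ P Q : ℂ[X], P ∈ parityDegreeLE ℂ k ∧ X * Q ∈ parityDegreeLE ℂ k ∧
      ∀ x : ℝ, x ^ 2 ≤ 1 → qspU Φ x = qspForm x (P.eval (x : ℂ)) (Q.eval (x : ℂ)) := by
  induction k with
  | zero =>
    refine ⟨C (Complex.exp (Complex.I * Φ 0)), 0, C_mem_parityDegreeLE_zero _, by simp, ?_⟩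
    intro x _
    rw [qspU_zero, Rz_eq_qspForm, eval_C, eval_zero]
  | succ k ih =>
    obtain ⟨P, Q, hP, hQ, hU⟩ := ih fun i => Φ i.succ
    set e := Complex.exp (Complex.I * Φ 0)
    have hQc : X * Q.map (starRingEnd ℂ) ∈ parityDegreeLE ℂ k := by
      simpa using map_mem_parityDegreeLE (starRingEnd ℂ) hQ
    refine ⟨e • (X * P - (1 - X ^ 2) * Q.map (starRingEnd ℂ)),
      e • (X * Q + P.map (starRingEnd ℂ)), ?_, ?_, ?_⟩
    · rw [show (1 - X ^ 2) * Q.map (starRingEnd ℂ) =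
          Q.map (starRingEnd ℂ) - X * (X * Q.map (starRingEnd ℂ)) by ring]
      exact Submodule.smul_mem _ _ <| sub_mem (X_mul_mem_parityDegreeLE hP) <|
        sub_mem (mem_parityDegreeLE_of_X_mul_mem hQc) (X_mul_mem_parityDegreeLE hQc)
    · rw [mul_smul_comm, mul_add]
      exact Submodule.smul_mem _ _ <| add_mem (X_mul_mem_parityDegreeLE hQ)
        (X_mul_mem_parityDegreeLE (map_mem_parityDegreeLE _ hP))
    · intro x hx
      rw [qspU_succ, hU x hx, Rz_mul_Wsig_mul_qspForm hx]
      simp [e, eval_map_conj, mul_add]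

/-- **Forward direction of the QSP structure theorem.**
For every phase list `Φ ∈ ℝ^{k+1}` there exist polynomials `P, Q ∈ ℂ[x]` with
`deg P ≤ k`, `deg Q ≤ k−1` (i.e. `deg Q < k`), `P` of parity `k mod 2`, `Q` of parity
`(k−1) mod 2`, satisfying `|P(x)|² + (1−x²)|Q(x)|² = 1` on `[−1,1]`, such that the top
row of `U(Φ, x)` equals `(P(x), iQ(x)√(1−x²))` for all `x ∈ [−1,1]`. -/
theorem qsp_forward (k : ℕ) (Φ : Fin (k + 1) → ℝ) :
    ∃ P Q : Polynomial ℂ,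
      P.degree ≤ k ∧ Q.degree < k ∧
      (∀ n : ℕ, P.coeff n ≠ 0 → n % 2 = k % 2) ∧
      (∀ n : ℕ, Q.coeff n ≠ 0 → n % 2 = (k + 1) % 2) ∧
      (∀ x : ℝ, x ∈ Set.Icc (-1 : ℝ) 1 →
        ‖P.eval (x : ℂ)‖ ^ 2
          + (1 - x ^ 2) * ‖Q.eval (x : ℂ)‖ ^ 2 = 1) ∧
      (∀ x : ℝ, x ∈ Set.Icc (-1 : ℝ) 1 →
        qspU Φ x 0 0 = P.eval (x : ℂ) ∧
        qspU Φ x 0 1 = Complex.I * Q.eval (x : ℂ) * (Real.sqrt (1 - x ^ 2) : ℂ)) := by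
  obtain ⟨P, Q, hP, hQ, hU⟩ := exists_qspU_eq_qspForm k Φ
  have hx2 : ∀ x ∈ Set.Icc (-1 : ℝ) 1, x ^ 2 ≤ 1 := fun x hx =>
    sq_le_one_iff_abs_le_one x |>.mpr (abs_le.mpr hx)
  refine ⟨P, Q, degree_le_of_mem_parityDegreeLE hP, degree_lt_of_X_mul_mem_parityDegreeLE hQ,
    fun n hn => (hP n hn).2, fun n hn => (X_mul_mem_parityDegreeLE_iff.mp hQ n hn).2,
    fun x hx => ?_, fun x hx => ?_⟩
  · have hdet := det_qspU Φ (hx2 x hx)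
    rwa [hU x (hx2 x hx), det_qspForm (hx2 x hx), Complex.ofReal_eq_one] at hdet
  · rw [hU x (hx2 x hx)]
    exact ⟨rfl, rfl⟩
end
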